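/- Let λ ∈ ℝ with λ ≠ 0, λ ≠ 1, and let t ∈ {0, 1, λ}. Define the Hermitian pencil M(x,y,z) = i·(x·J_x + z·J_z + y·B(t,0,1)), where i is the imaginary unit. Then each of the three coefficient matrices i·J_x, i·J_z, i·B(t,0,1) is Hermitian, and for no (x,y,z) ∈ ℝ³ is the matrix M(x,y,z) positive definite or negative definite. -/

import Mathlib

open Matrix
open scoped ComplexOrder

/-- The skew-symmetric 6×6 matrix `J_x` with above-diagonal entries
`(1,6) = (2,5) = (3,4) = 1` and all other above-diagonal entries `0`. -/
noncomputable def Jx : Matrix (Fin 6) (Fin 6) ℂ :=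
  !![0, 0, 0, 0, 0, 1;
     0, 0, 0, 0, 1, 0;
     0, 0, 0, 1, 0, 0;
     0, 0, -1, 0, 0, 0;
     0, -1, 0, 0, 0, 0;
     -1, 0, 0, 0, 0, 0]

/-- The skew-symmetric 6×6 matrix `J_z` with above-diagonal entries
`(1,5) = (2,4) = 1` and all other above-diagonal entries `0`. -/
noncomputable def Jz : Matrix (Fin 6) (Fin 6) ℂ :=
  !![0, 0, 0, 0, 1, 0;
     0, 0, 0, 1, 0, 0;
     0, 0, 0, 0, 0, 0;
     0, -1, 0, 0, 0, 0;
     -1, 0, 0, 0, 0, 0;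
     0, 0, 0, 0, 0, 0]

/-- The skew-symmetric 6×6 matrix `B(t,s,c)` (depending also on the parameter `l = λ`)
with above-diagonal entries `(1,2) = c`, `(1,4) = (3t² − 2t(1+λ) − (1−λ)²)/4`, `(1,5) = s`,
`(1,6) = (t−1−λ)/2`, `(2,4) = −s`, `(2,5) = −t`, `(3,4) = (t−1−λ)/2`, `(3,6) = −1`,
and all other above-diagonal entries `0`. -/
noncomputable def Bmat (l t s c : ℂ) : Matrix (Fin 6) (Fin 6) ℂ :=
  !![0, c, 0, (3*t^2 - 2*t*(1+l) - (1-l)^2)/4, s, (t-1-l)/2;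
     -c, 0, 0, -s, -t, 0;
     0, 0, 0, (t-1-l)/2, 0, -1;
     -((3*t^2 - 2*t*(1+l) - (1-l)^2)/4), s, -((t-1-l)/2), 0, 0, 0;
     -s, t, 0, 0, 0, 0;
     -((t-1-l)/2), 0, 1, 0, 0, 0]

@[simp]
lemma cons_val_five {α : Type*} {m : ℕ} (x : α) (u : Fin (m+5) → α) :
    Matrix.vecCons x u 5 = Matrix.vecHead (Matrix.vecTail (Matrix.vecTail (Matrix.vecTail (Matrix.vecTail u)))) :=
  rfl

lemma not_posDef_of_diag_zero {M : Matrix (Fin 6) (Fin 6) ℂ} (h : M 0 0 = 0) :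
    ¬ M.PosDef := by
  intro hp
  have hv : (Pi.single 0 1 : Fin 6 → ℂ) ≠ 0 := by
    intro h0
    have := congrFun h0 0
    simp at this
  have h2 := hp.dotProduct_mulVec_pos hv
  have h3 : star (Pi.single (0 : Fin 6) (1 : ℂ)) ⬝ᵥ M *ᵥ Pi.single 0 1 = M 0 0 := by
    simp [Matrix.mulVec, dotProduct, Pi.single_apply, Fin.sum_univ_six]
  rw [h3, h] at h2
  exact lt_irrefl 0 h2

set_option maxHeartbeats 1600000 in
theorem stmt_17 (l : ℝ) (hl0 : l ≠ 0) (hl1 : l ≠ 1)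
    (t : ℝ) (ht : t = 0 ∨ t = 1 ∨ t = l) :
    (Complex.I • Jx).IsHermitian ∧
    (Complex.I • Jz).IsHermitian ∧
    (Complex.I • Bmat (l : ℂ) (t : ℂ) 0 1).IsHermitian ∧
    ∀ x y z : ℝ,
      ¬ (Complex.I • ((x : ℂ) • Jx + (z : ℂ) • Jz + (y : ℂ) • Bmat (l : ℂ) (t : ℂ) 0 1)).PosDef ∧
      ¬ (-(Complex.I • ((x : ℂ) • Jx + (z : ℂ) • Jz + (y : ℂ) • Bmat (l : ℂ) (t : ℂ) 0 1))).PosDef := by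
  refine ⟨?_, ?_, ?_, ?_⟩
  · unfold Matrix.IsHermitian
    ext i j
    fin_cases i <;> fin_cases j <;>
      simp [Jx, Matrix.conjTranspose_apply, Complex.conj_I, Matrix.vecHead, Matrix.vecTail]
  · unfold Matrix.IsHermitian
    ext i j
    fin_cases i <;> fin_cases j <;>
      simp [Jz, Matrix.conjTranspose_apply, Complex.conj_I, Matrix.vecHead, Matrix.vecTail]
  · unfold Matrix.IsHermitian
    ext i j
    fin_cases i <;> fin_cases j <;>
      simp [Bmat, Matrix.conjTranspose_apply, Complex.conj_I, map_div₀,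
        map_sub, map_add, _root_.map_mul, map_pow, _root_.map_one, map_ofNat, Matrix.vecHead, Matrix.vecTail,
        Complex.conj_ofReal] <;> ring
  · intro x y z
    constructor
    · apply not_posDef_of_diag_zero
      simp [Jx, Jz, Bmat, Matrix.smul_apply, Matrix.add_apply]
    · apply not_posDef_of_diag_zero
      simp [Jx, Jz, Bmat, Matrix.smul_apply, Matrix.add_apply]
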